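/- For the convex quadratic problem of minimizing (1/2)xᵀQ_d x + bᵀx over the nonpositive orthant, with b nonincreasing and k₀ the unique threshold index satisfying b_{k₀} ≥ S_{k₀}/(k₀+1) and b_{k₀+1} < S_{k₀+1}/(k₀+2), the point x* with x*_i = (1/2)(S_{k₀}/(1+k₀) − b_i) for i ≤ k₀ and x*_i = 0 for i > k₀ is the unique global minimizer. -/

import Mathlib

open Matrix Finset

def Qmat (d : ℕ) : Matrix (Fin d) (Fin d) ℝ :=
  (2 : ℝ) • (1 : Matrix (Fin d) (Fin d) ℝ) + (2 : ℝ) • Matrix.of (fun _ _ => (1 : ℝ))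

/-! For a symmetric `Q`, the objective `f x = ½ xᵀQx + bᵀx` satisfies
`f y - f x = ½ (y - x)ᵀQ(y - x) + g ⬝ᵥ (y - x)` with gradient `g = Q x + b`.
At the threshold point `x*` the gradient vanishes on the first `k₀` coordinates and equals
`b i - S / (k₀ + 1) ≤ 0` on the others (the threshold conditions plus monotonicity of `b`),
so `g ⬝ᵥ x* = 0` and `g ⬝ᵥ y ≥ 0` for every `y ≤ 0`. Positive definiteness of
`Q_d = 2 I + 2 𝟙𝟙ᵀ` then makes `x*` the unique minimiser over the nonpositive orthant. -/

noncomputable def quadObjective {n : Type*} [Fintype n] (Q : Matrix n n ℝ) (b x : n → ℝ) : ℝ :=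
  (1 / 2 : ℝ) * (x ⬝ᵥ Q *ᵥ x) + b ⬝ᵥ x

section KKT

variable {n : Type*} [Fintype n] {Q : Matrix n n ℝ} {b x y : n → ℝ}

theorem quadObjective_sub (hQ : Q.IsSymm) :
    quadObjective Q b y - quadObjective Q b x
      = (1 / 2 : ℝ) * ((y - x) ⬝ᵥ Q *ᵥ (y - x)) + (Q *ᵥ x + b) ⬝ᵥ (y - x) := by
  have hsymm : x ⬝ᵥ Q *ᵥ y = y ⬝ᵥ Q *ᵥ x := by
    rw [dotProduct_mulVec, ← mulVec_transpose, hQ.eq, dotProduct_comm]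
  simp only [quadObjective, mulVec_sub, dotProduct_sub, sub_dotProduct, add_dotProduct]
  rw [dotProduct_comm (Q *ᵥ x) y, dotProduct_comm (Q *ᵥ x) x, hsymm]
  ring

theorem half_quadForm_le_quadObjective_sub (hQ : Q.IsSymm) (hgrad : ∀ i, (Q *ᵥ x + b) i ≤ 0)
    (hcompl : (Q *ᵥ x + b) ⬝ᵥ x = 0) (hy : ∀ i, y i ≤ 0) :
    (1 / 2 : ℝ) * ((y - x) ⬝ᵥ Q *ᵥ (y - x)) ≤ quadObjective Q b y - quadObjective Q b x := by
  have hlin : 0 ≤ (Q *ᵥ x + b) ⬝ᵥ y :=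
    sum_nonneg fun i _ => mul_nonneg_of_nonpos_of_nonpos (hgrad i) (hy i)
  rw [quadObjective_sub hQ, dotProduct_sub, hcompl, sub_zero]
  linarith

theorem quadObjective_le_of_kkt (hQ : Q.PosSemidef) (hgrad : ∀ i, (Q *ᵥ x + b) i ≤ 0)
    (hcompl : (Q *ᵥ x + b) ⬝ᵥ x = 0) (hy : ∀ i, y i ≤ 0) :
    quadObjective Q b x ≤ quadObjective Q b y := by
  have hquad : 0 ≤ (y - x) ⬝ᵥ Q *ᵥ (y - x) := by
    simpa using hQ.dotProduct_mulVec_nonneg (y - x)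
  have := half_quadForm_le_quadObjective_sub (isHermitian_iff_isSymm.mp hQ.1) hgrad hcompl hy
  linarith

theorem eq_of_quadObjective_eq_of_kkt (hQ : Q.PosDef) (hgrad : ∀ i, (Q *ᵥ x + b) i ≤ 0)
    (hcompl : (Q *ᵥ x + b) ⬝ᵥ x = 0) (hy : ∀ i, y i ≤ 0)
    (heq : quadObjective Q b y = quadObjective Q b x) : y = x := by
  by_contra hne
  have hquad : 0 < (y - x) ⬝ᵥ Q *ᵥ (y - x) := by
    simpa using hQ.dotProduct_mulVec_pos (sub_ne_zero.mpr hne)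
  have := half_quadForm_le_quadObjective_sub (isHermitian_iff_isSymm.mp hQ.1) hgrad hcompl hy
  linarith

end KKT

theorem Qmat_mulVec_apply (d : ℕ) (z : Fin d → ℝ) (i : Fin d) :
    (Qmat d *ᵥ z) i = 2 * z i + 2 * ∑ j, z j := by
  simp [Qmat, mulVec, dotProduct, one_apply, add_mul, ite_mul, sum_add_distrib, mul_sum]

theorem Qmat_posDef (d : ℕ) : (Qmat d).PosDef := by
  have hJ : (Matrix.of fun _ _ => (1 : ℝ) : Matrix (Fin d) (Fin d) ℝ)
      = vecMulVec (star (1 : Fin d → ℝ)) 1 := by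
    ext i j; simp [vecMulVec]
  rw [Qmat, hJ]
  exact (PosDef.one.smul two_pos).add_posSemidef
    ((posSemidef_vecMulVec_star_self 1).smul zero_le_two)

section Threshold

variable {d : ℕ} {b : Fin d → ℝ} {k₀ : ℕ} {S : ℝ}

theorem div_le_of_lt_threshold (hb : Antitone b) (hk₀ : k₀ ≤ d)
    (hlow : ∀ i : Fin d, (i : ℕ) + 1 = k₀ → S / ((k₀ : ℝ) + 1) ≤ b i)
    {i : Fin d} (hi : (i : ℕ) < k₀) : S / (1 + (k₀ : ℝ)) ≤ b i := by
  have hlast : k₀ - 1 < d := by omega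
  calc S / (1 + (k₀ : ℝ)) = S / ((k₀ : ℝ) + 1) := by rw [add_comm]
    _ ≤ b ⟨k₀ - 1, hlast⟩ := hlow _ (Nat.sub_add_cancel (by omega))
    _ ≤ b i := hb (Fin.le_def.mpr (Nat.le_sub_one_of_lt hi))

theorem le_div_of_threshold_le (hb : Antitone b)
    (hhigh : ∀ i : Fin d, (i : ℕ) = k₀ → b i < (S + b i) / ((k₀ : ℝ) + 2))
    {i : Fin d} (hi : k₀ ≤ (i : ℕ)) : b i ≤ S / (1 + (k₀ : ℝ)) := by
  have hfirst : k₀ < d := hi.trans_lt i.isLt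
  have h := hhigh ⟨k₀, hfirst⟩ rfl
  rw [lt_div_iff₀ (by positivity)] at h
  calc b i ≤ b ⟨k₀, hfirst⟩ := hb (Fin.le_def.mpr hi)
    _ ≤ S / (1 + (k₀ : ℝ)) := by rw [le_div_iff₀ (by positivity)]; linarith

variable {xs : Fin d → ℝ}

theorem sum_threshold_point (hk₀ : k₀ ≤ d)
    (hS : S = ∑ i : Fin d, if (i : ℕ) < k₀ then b i else 0)
    (hx : ∀ i : Fin d, xs i =
      if (i : ℕ) < k₀ then (1 / 2 : ℝ) * (S / (1 + (k₀ : ℝ)) - b i) else 0) :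
    ∑ i, xs i = -(S / (1 + (k₀ : ℝ))) / 2 := by
  have hcard : #{i : Fin d | (i : ℕ) < k₀} = k₀ := by
    rw [Fin.card_filter_val_lt, min_eq_right hk₀]
  simp only [hx, ← sum_filter, ← mul_sum, sum_sub_distrib, sum_const, hcard, nsmul_eq_mul] at hS ⊢
  rw [← hS]
  field_simp
  ring

theorem Qmat_mulVec_threshold_point_add_apply (hk₀ : k₀ ≤ d)
    (hS : S = ∑ i : Fin d, if (i : ℕ) < k₀ then b i else 0)
    (hx : ∀ i : Fin d, xs i =
      if (i : ℕ) < k₀ then (1 / 2 : ℝ) * (S / (1 + (k₀ : ℝ)) - b i) else 0) (i : Fin d) :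
    (Qmat d *ᵥ xs + b) i = if (i : ℕ) < k₀ then 0 else b i - S / (1 + (k₀ : ℝ)) := by
  rw [Pi.add_apply, Qmat_mulVec_apply, sum_threshold_point hk₀ hS hx, hx]
  split_ifs <;> ring

end Threshold

theorem stmt8 (d : ℕ) (b : Fin d → ℝ)
    (hb : ∀ i j : Fin d, i ≤ j → b j ≤ b i)
    (k₀ : ℕ) (hk₀ : k₀ ≤ d)
    (S : ℝ) (hS : S = ∑ i : Fin d, if (i : ℕ) < k₀ then b i else 0)
    (hlow : ∀ i : Fin d, (i : ℕ) + 1 = k₀ → S / ((k₀ : ℝ) + 1) ≤ b i)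
    (hhigh : ∀ i : Fin d, (i : ℕ) = k₀ → b i < (S + b i) / ((k₀ : ℝ) + 2))
    (xs : Fin d → ℝ)
    (hx : ∀ i : Fin d, xs i =
      if (i : ℕ) < k₀ then (1 / 2 : ℝ) * (S / (1 + (k₀ : ℝ)) - b i) else 0) :
    (∀ i, xs i ≤ 0) ∧
    (∀ y : Fin d → ℝ, (∀ i, y i ≤ 0) →
      (1 / 2 : ℝ) * (xs ⬝ᵥ (Qmat d).mulVec xs) + b ⬝ᵥ xs
        ≤ (1 / 2 : ℝ) * (y ⬝ᵥ (Qmat d).mulVec y) + b ⬝ᵥ y) ∧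
    (∀ y : Fin d → ℝ, (∀ i, y i ≤ 0) →
      (1 / 2 : ℝ) * (y ⬝ᵥ (Qmat d).mulVec y) + b ⬝ᵥ y
        = (1 / 2 : ℝ) * (xs ⬝ᵥ (Qmat d).mulVec xs) + b ⬝ᵥ xs → y = xs) := by
  have hgrad := Qmat_mulVec_threshold_point_add_apply hk₀ hS hx
  have hxs_nonpos : ∀ i, xs i ≤ 0 := fun i => by
    rw [hx]
    split_ifs with hi
    · linarith [div_le_of_lt_threshold hb hk₀ hlow hi]
    · rfl
  have hgrad_nonpos : ∀ i, (Qmat d *ᵥ xs + b) i ≤ 0 := fun i => by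
    rw [hgrad]
    split_ifs with hi
    · rfl
    · linarith [le_div_of_threshold_le hb hhigh (not_lt.mp hi)]
  have hcompl : (Qmat d *ᵥ xs + b) ⬝ᵥ xs = 0 :=
    sum_eq_zero fun i _ => by rw [hgrad, hx]; split_ifs <;> simp
  exact ⟨hxs_nonpos,
    fun y hy => quadObjective_le_of_kkt (Qmat_posDef d).posSemidef hgrad_nonpos hcompl hy,
    fun y hy => eq_of_quadObjective_eq_of_kkt (Qmat_posDef d) hgrad_nonpos hcompl hy⟩
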